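/- arXiv:math-ph/0308040 — 3 statements merged into one kernel-verified Lean document; each statement's English description precedes it below -/
import Mathlib

section
/- For every real B > 0, every integer m ≥ 0 and every x ∈ ℝ with x ≠ 0, the regularization of the three-dimensional Coulomb potential by the Landau state γ_m^B satisfies ∫_{ℝ²} |γ_m^B(y,z)|² (x² + y² + z²)^{−1/2} dy dz = V_m^B(x), where V_m^B(x) = (1/m!) ∫₀^∞ u^m e^{−u} (x² + u/B)^{−1/2} du. -/
open MeasureTheory

/-- The Landau state `γ_m^B` as a function on `ℝ²`:
`γ_m^B(y,z) = (π m!)^{-1/2} B^{(m+1)/2} (y - iz)^m e^{-B(y²+z²)/2}`. -/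
noncomputable def landauState (B : ℝ) (m : ℕ) (p : ℝ × ℝ) : ℂ :=
  (((Real.pi * (m.factorial : ℝ)) ^ (-(1 : ℝ) / 2) * B ^ (((m : ℝ) + 1) / 2) : ℝ) : ℂ) *
    ((p.1 : ℂ) - Complex.I * (p.2 : ℂ)) ^ m *
    Complex.exp (((-(B * (p.1 ^ 2 + p.2 ^ 2)) / 2 : ℝ) : ℂ))

/-- The regularized Coulomb potential `V_m^B`. -/
noncomputable def VmB (B : ℝ) (m : ℕ) (x : ℝ) : ℝ :=
  (1 / (m.factorial : ℝ)) *
    ∫ u in Set.Ioi (0 : ℝ), u ^ m * Real.exp (-u) / Real.sqrt (x ^ 2 + u / B)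

/-
The weight `|γ_m^B|²` depends only on `t = y² + z²`, being proportional to `t^m e^{-B t}`, so the
whole integrand is radial, and polar coordinates followed by `t = r²` give
`∫_{ℝ²} g(y² + z²) = π ∫₀^∞ g(t) dt`. The substitution `u = B t` then produces `V_m^B(x)`,
the normalisations of `γ_m^B` and of `V_m^B` cancelling exactly.
-/

open Set

section RadialIntegral

variable {E : Type*} [NormedAddCommGroup E] [NormedSpace ℝ E]

theorem integral_Ioi_smul_comp_sq (g : ℝ → E) :
    ∫ r in Ioi (0 : ℝ), r • g (r ^ 2) = (1 / 2 : ℝ) • ∫ t in Ioi (0 : ℝ), g t := by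
  rw [← integral_comp_rpow_Ioi_of_pos (g := g) two_pos, ← integral_smul]
  refine setIntegral_congr_fun measurableSet_Ioi fun r _ => ?_
  rw [smul_smul, Real.rpow_two, show (2 : ℝ) - 1 = 1 by norm_num, Real.rpow_one]
  congr 1
  ring

theorem integral_comp_sq_add_sq (g : ℝ → E) :
    ∫ p : ℝ × ℝ, g (p.1 ^ 2 + p.2 ^ 2) = Real.pi • ∫ t in Ioi (0 : ℝ), g t := by
  have hradial : ∀ p : ℝ × ℝ,
      (polarCoord.symm p).1 ^ 2 + (polarCoord.symm p).2 ^ 2 = p.1 ^ 2 := fun p => by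
    simp only [polarCoord_symm_apply]
    rw [mul_pow, mul_pow, ← mul_add, Real.cos_sq_add_sin_sq, mul_one]
  have hangle : (volume.restrict (Ioo (-Real.pi) Real.pi)).real univ = 2 * Real.pi := by
    rw [measureReal_def, Measure.restrict_apply_univ, Real.volume_Ioo,
      ENNReal.toReal_ofReal (by linarith [Real.pi_pos])]
    ring
  rw [← integral_comp_polarCoord_symm]
  simp only [hradial]
  rw [show polarCoord.target = Ioi (0 : ℝ) ×ˢ Ioo (-Real.pi) Real.pi from rfl,
    Measure.volume_eq_prod, ← Measure.prod_restrict,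
    integral_fun_fst (f := fun r : ℝ => r • g (r ^ 2)), hangle, integral_Ioi_smul_comp_sq,
    smul_smul]
  congr 1
  ring

end RadialIntegral

theorem norm_landauState_sq {B : ℝ} (hB : 0 ≤ B) (m : ℕ) (p : ℝ × ℝ) :
    ‖landauState B m p‖ ^ 2 = B ^ (m + 1) / (Real.pi * m.factorial) *
      (p.1 ^ 2 + p.2 ^ 2) ^ m * Real.exp (-(B * (p.1 ^ 2 + p.2 ^ 2))) := by
  have hnormalisation : ((Real.pi * m.factorial) ^ (-(1 : ℝ) / 2)) ^ 2
      = (Real.pi * m.factorial)⁻¹ := by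
    rw [← Real.rpow_natCast _ 2, ← Real.rpow_mul (by positivity)]
    norm_num [Real.rpow_neg_one]
  have hscale : (B ^ (((m : ℝ) + 1) / 2)) ^ 2 = B ^ (m + 1) := by
    rw [← Real.rpow_natCast _ 2, ← Real.rpow_mul hB, Nat.cast_ofNat, div_mul_cancel₀ _ two_ne_zero]
    exact_mod_cast Real.rpow_natCast B (m + 1)
  have hpolynomial : ‖(p.1 : ℂ) - Complex.I * p.2‖ ^ 2 = p.1 ^ 2 + p.2 ^ 2 := by
    rw [Complex.sq_norm, Complex.normSq_apply]
    simp [sq]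
  have hgaussian : Real.exp (-(B * (p.1 ^ 2 + p.2 ^ 2)) / 2) ^ 2
      = Real.exp (-(B * (p.1 ^ 2 + p.2 ^ 2))) := by
    rw [sq, ← Real.exp_add, add_halves]
  rw [landauState, norm_mul, norm_mul, mul_pow, mul_pow, Complex.norm_real, Real.norm_eq_abs,
    sq_abs, mul_pow, hnormalisation, hscale, norm_pow, ← pow_mul, mul_comm m 2, pow_mul,
    hpolynomial, Complex.norm_exp, Complex.ofReal_re, hgaussian, div_eq_inv_mul]

theorem landau_regularization_eq_VmB_general (B : ℝ) (hB : 0 < B) (m : ℕ) (x : ℝ) :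
    (∫ p : ℝ × ℝ,
        ‖landauState B m p‖ ^ 2 / Real.sqrt (x ^ 2 + p.1 ^ 2 + p.2 ^ 2))
      = VmB B m x := by
  set f : ℝ → ℝ := fun u => u ^ m * Real.exp (-u) / Real.sqrt (x ^ 2 + u / B)
  have hradial : ∀ t, B ^ (m + 1) / (Real.pi * m.factorial) * t ^ m * Real.exp (-(B * t))
      / Real.sqrt (x ^ 2 + t) = B / (Real.pi * m.factorial) * f (B * t) := fun t => by
    simp only [f, mul_div_cancel_left₀ t hB.ne', mul_pow, pow_succ]
    ring
  calc (∫ p : ℝ × ℝ, ‖landauState B m p‖ ^ 2 / Real.sqrt (x ^ 2 + p.1 ^ 2 + p.2 ^ 2))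
      = ∫ p : ℝ × ℝ, B / (Real.pi * m.factorial) * f (B * (p.1 ^ 2 + p.2 ^ 2)) := by
        simp only [norm_landauState_sq hB.le, add_assoc, hradial]
    _ = Real.pi * (B / (Real.pi * m.factorial) * (B⁻¹ * ∫ u in Ioi 0, f u)) := by
        rw [integral_comp_sq_add_sq (fun t => B / (Real.pi * m.factorial) * f (B * t)),
          integral_const_mul, integral_comp_mul_left_Ioi f 0 hB, mul_zero, smul_eq_mul,
          smul_eq_mul]
    _ = 1 / m.factorial * ∫ u in Ioi 0, f u := by
        rw [← mul_assoc, ← mul_assoc]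
        congr 1
        field_simp [Real.pi_pos.ne', hB.ne']
    _ = VmB B m x := rfl

/-- For `B > 0`, `m ≥ 0` and `x ≠ 0`, regularizing the Coulomb
potential with the Landau state `γ_m^B` gives `V_m^B(x)`. -/
theorem landau_regularization_eq_VmB (B : ℝ) (hB : 0 < B) (m : ℕ) (x : ℝ) (hx : x ≠ 0) :
    (∫ p : ℝ × ℝ,
        ‖landauState B m p‖ ^ 2 / Real.sqrt (x ^ 2 + p.1 ^ 2 + p.2 ^ 2))
      = VmB B m x :=
  landau_regularization_eq_VmB_general B hB m x
end

section
/- For every integer m ≥ 0 and every x ∈ ℝ with x ≠ 0, one has V_{m+1}(x) < V_m(x) < 1/|x|. -/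
open MeasureTheory

/-- The regularized Coulomb potential
`V_m(x) = (1/m!) ∫₀^∞ u^m e^{−u} (x² + u)^{−1/2} du`. -/
noncomputable def Vm (m : ℕ) (x : ℝ) : ℝ :=
  (1 / (m.factorial : ℝ)) *
    ∫ u in Set.Ioi (0 : ℝ), u ^ m * Real.exp (-u) / Real.sqrt (x ^ 2 + u)

/-!
Write `V_m(x) = (1/m!) ∫₀^∞ u^m e^{-u} g(u) du` with `g(u) = (x² + u)^{-1/2}`, a strictly
decreasing function with `g < 1/|x|` on `(0, ∞)`. Since `u^m e^{-u} du / m!` is a probability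
measure, the bound `V_m(x) < 1/|x|` is immediate. For the monotonicity in `m`, the Gamma identity
`∫₀^∞ (m + 1 - u) u^m e^{-u} du = (m + 1)! - (m + 1)! = 0` lets us subtract the constant
`g(m + 1)`, so that `(m + 1)! (V_m - V_{m+1}) = ∫₀^∞ u^m e^{-u} (m + 1 - u) (g(u) - g(m + 1)) du`,
whose integrand is positive except at `u = m + 1`.
-/

open Set Real Nat

lemma setIntegral_pos_of_ae_pos {X : Type*} [MeasurableSpace X] {μ : Measure X} {s : Set X}
    {f : X → ℝ} (hs : μ s ≠ 0) (hf : IntegrableOn f s μ) (hpos : ∀ᵐ x ∂μ.restrict s, 0 < f x) :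
    0 < ∫ x in s, f x ∂μ := by
  rw [integral_pos_iff_support_of_nonneg_ae (hpos.mono fun _ h => h.le) hf, pos_iff_ne_zero]
  intro hsupp
  have hfalse : ∀ᵐ x ∂μ.restrict s, False := by
    filter_upwards [hpos, measure_eq_zero_iff_ae_notMem.1 hsupp] with x hx hx0
      using hx0 hx.ne'
  exact hs (Measure.restrict_eq_zero.1 (ae_eq_bot.1 (Filter.eventually_false_iff_eq_bot.1 hfalse)))

lemma StrictAntiOn.sub_mul_sub_pos {g : ℝ → ℝ} {s : Set ℝ} (hg : StrictAntiOn g s) {a u : ℝ}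
    (ha : a ∈ s) (hu : u ∈ s) (hne : u ≠ a) : 0 < (a - u) * (g u - g a) := by
  rcases hne.lt_or_gt with h | h
  · exact mul_pos (sub_pos.2 h) (sub_pos.2 (hg hu ha h))
  · exact mul_pos_of_neg_of_neg (sub_neg.2 h) (sub_neg.2 (hg ha hu h))

lemma integrableOn_pow_mul_exp_neg (k : ℕ) :
    IntegrableOn (fun u : ℝ => u ^ k * exp (-u)) (Ioi 0) := by
  refine (GammaIntegral_convergent (s := k + 1) (by positivity)).congr_fun (fun u _ => ?_)
    measurableSet_Ioi
  dsimp only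
  rw [add_sub_cancel_right, rpow_natCast, mul_comm]

lemma integral_pow_mul_exp_neg (k : ℕ) : ∫ u in Ioi (0 : ℝ), u ^ k * exp (-u) = k ! := by
  rw [← Gamma_nat_eq_factorial, Gamma_eq_integral (by positivity)]
  refine setIntegral_congr_fun measurableSet_Ioi (fun u _ => ?_)
  rw [add_sub_cancel_right, rpow_natCast, mul_comm]

lemma integrableOn_pow_mul_exp_neg_mul_of_bounded {g : ℝ → ℝ} {C : ℝ}
    (hg : AEStronglyMeasurable g (volume.restrict (Ioi 0))) (hC : ∀ u ∈ Ioi 0, |g u| ≤ C)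
    (k : ℕ) : IntegrableOn (fun u => u ^ k * exp (-u) * g u) (Ioi 0) :=
  (integrableOn_pow_mul_exp_neg k).mul_bdd hg (ae_restrict_of_forall_mem measurableSet_Ioi hC)

lemma integral_pow_mul_exp_neg_mul_lt_factorial_mul {g : ℝ → ℝ} {c : ℝ} (k : ℕ)
    (hg : IntegrableOn (fun u => u ^ k * exp (-u) * g u) (Ioi 0)) (hgc : ∀ u ∈ Ioi 0, g u < c) :
    ∫ u in Ioi 0, u ^ k * exp (-u) * g u < k ! * c := by
  have hpos : 0 < ∫ u in Ioi 0, (u ^ k * exp (-u) * c - u ^ k * exp (-u) * g u) := by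
    refine setIntegral_pos_of_ae_pos (by simp)
      (((integrableOn_pow_mul_exp_neg k).mul_const c).sub hg)
      (ae_restrict_of_forall_mem measurableSet_Ioi fun u (hu : 0 < u) => ?_)
    rw [← mul_sub]
    exact mul_pos (by positivity) (sub_pos.2 (hgc u hu))
  rwa [integral_sub ((integrableOn_pow_mul_exp_neg k).mul_const c) hg, integral_mul_const,
    integral_pow_mul_exp_neg, sub_pos] at hpos

lemma integral_pow_succ_mul_exp_neg_mul_lt {g : ℝ → ℝ} (k : ℕ) (hg : StrictAntiOn g (Ioi 0))
    (hk : IntegrableOn (fun u => u ^ k * exp (-u) * g u) (Ioi 0))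
    (hk1 : IntegrableOn (fun u => u ^ (k + 1) * exp (-u) * g u) (Ioi 0)) :
    ∫ u in Ioi 0, u ^ (k + 1) * exp (-u) * g u <
      (k + 1) * ∫ u in Ioi 0, u ^ k * exp (-u) * g u := by
  set c := g (k + 1)
  have hφ : IntegrableOn
      (fun u => (k + 1) * (u ^ k * exp (-u) * g u) - u ^ (k + 1) * exp (-u) * g u) (Ioi 0) :=
    (hk.const_mul _).sub hk1
  have hψ : IntegrableOn
      (fun u => (k + 1) * (u ^ k * exp (-u)) - u ^ (k + 1) * exp (-u)) (Ioi 0) :=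
    ((integrableOn_pow_mul_exp_neg k).const_mul _).sub (integrableOn_pow_mul_exp_neg (k + 1))
  have hψ_zero : ∫ u in Ioi 0, ((k + 1) * (u ^ k * exp (-u)) - u ^ (k + 1) * exp (-u)) = 0 := by
    rw [integral_sub ((integrableOn_pow_mul_exp_neg k).const_mul _)
      (integrableOn_pow_mul_exp_neg (k + 1)), integral_const_mul, integral_pow_mul_exp_neg,
      integral_pow_mul_exp_neg, factorial_succ]
    push_cast
    ring
  have hpos := setIntegral_pos_of_ae_pos (by simp) (hφ.sub (hψ.const_mul c)) <| by
    filter_upwards [ae_restrict_mem measurableSet_Ioi,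
      ae_restrict_of_ae (measure_eq_zero_iff_ae_notMem.1 (measure_singleton ((k : ℝ) + 1)))]
      with u (hu : 0 < u) hne
    have key := hg.sub_mul_sub_pos (a := k + 1) (by simp only [mem_Ioi]; positivity) hu hne
    calc (0 : ℝ) < u ^ k * exp (-u) * ((k + 1 - u) * (g u - c)) := mul_pos (by positivity) key
      _ = _ := by simp only [Pi.sub_apply, pow_succ]; ring
  simp only [Pi.sub_apply] at hpos
  rw [integral_sub hφ (hψ.const_mul c), integral_const_mul, hψ_zero,
    integral_sub (hk.const_mul _) hk1, integral_const_mul] at hpos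
  linarith

lemma strictAntiOn_inv_sqrt_sq_add (x : ℝ) :
    StrictAntiOn (fun u => (√(x ^ 2 + u))⁻¹) (Ioi 0) := fun u (hu : 0 < u) _ _ huv =>
  inv_strictAnti₀ (sqrt_pos.2 (by positivity)) (sqrt_lt_sqrt (by positivity) (by linarith))

lemma inv_sqrt_sq_add_lt_inv_abs {x u : ℝ} (hx : x ≠ 0) (hu : 0 < u) :
    (√(x ^ 2 + u))⁻¹ < |x|⁻¹ := by
  refine inv_strictAnti₀ (abs_pos.2 hx) ?_
  rw [← sqrt_sq_eq_abs]
  exact sqrt_lt_sqrt (sq_nonneg x) (by linarith)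

/-- For every `m ≥ 0` and `x ≠ 0`: `V_{m+1}(x) < V_m(x) < 1/|x|`. -/
theorem Vm_succ_lt_Vm_lt_inv_abs (m : ℕ) (x : ℝ) (hx : x ≠ 0) :
    Vm (m + 1) x < Vm m x ∧ Vm m x < 1 / |x| := by
  set g : ℝ → ℝ := fun u => (√(x ^ 2 + u))⁻¹
  set I : ℕ → ℝ := fun k => ∫ u in Ioi 0, u ^ k * exp (-u) * g u
  have hVm (k : ℕ) : Vm k x = (k ! : ℝ)⁻¹ * I k := by
    simp only [Vm, I, g, div_eq_mul_inv, one_mul]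
  have hg_lt (u : ℝ) (hu : u ∈ Ioi 0) : g u < |x|⁻¹ := inv_sqrt_sq_add_lt_inv_abs hx hu
  have hint (k : ℕ) : IntegrableOn (fun u => u ^ k * exp (-u) * g u) (Ioi 0) :=
    integrableOn_pow_mul_exp_neg_mul_of_bounded (by fun_prop)
      (fun u hu => by rw [abs_of_nonneg (by positivity)]; exact (hg_lt u hu).le) k
  constructor
  · calc Vm (m + 1) x = ((m + 1) ! : ℝ)⁻¹ * I (m + 1) := hVm _
      _ < ((m + 1) ! : ℝ)⁻¹ * ((m + 1) * I m) := by
        gcongr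
        exact integral_pow_succ_mul_exp_neg_mul_lt m (strictAntiOn_inv_sqrt_sq_add x) (hint m)
          (hint (m + 1))
      _ = Vm m x := by rw [hVm, factorial_succ]; push_cast; field_simp
  · calc Vm m x = (m ! : ℝ)⁻¹ * I m := hVm m
      _ < (m ! : ℝ)⁻¹ * (m ! * |x|⁻¹) := by
        gcongr
        exact integral_pow_mul_exp_neg_mul_lt_factorial_mul m (hint m) hg_lt
      _ = 1 / |x| := by field_simp
end

section
/- For every integer N ≥ 1 and every x ∈ ℝ, the average V_av(x) = (1/N) Σ_{j=0}^{N−1} V_j(x) satisfies V_av(x) ≤ 2 V_N(x). -/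
open MeasureTheory

/-!
Write `I_m = m! V_m(x) = ∫₀^∞ u^m e^{-u} (x² + u)^{-1/2} du`. Multiplying and dividing by `√u`,
`I_{N+1} - (N + 1/2) I_N = ∫₀^∞ w(u) h(u) du` with `w(u) = (u - s) u^{s-1} e^{-u}`, `s = N + 1/2`,
and `h(u) = √u / √(x² + u)`. The weight `w` has total mass `Γ(s+1) - s Γ(s) = 0` and changes sign
only at `s`, while `h` is increasing, so `∫ w h ≥ h(s) ∫ w = 0`. Hence
`(N + 1/2) V_N ≤ (N + 1) V_{N+1}`, and by induction `∑_{j<N} V_j ≤ 2N V_N`.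
-/

open Real Set

theorem mul_setIntegral_le_setIntegral_mul_of_monotoneOn {α : Type*} [LinearOrder α]
    [MeasurableSpace α] {μ : Measure α} {s : Set α} (hs : MeasurableSet s) {w h : α → ℝ}
    {c : α} (hc : c ∈ s) (hh : MonotoneOn h s) (hw_neg : ∀ u ∈ s, u < c → w u ≤ 0)
    (hw_pos : ∀ u ∈ s, c < u → 0 ≤ w u) (hw : IntegrableOn w s μ)
    (hwh : IntegrableOn (fun u => w u * h u) s μ) :
    h c * ∫ u in s, w u ∂μ ≤ ∫ u in s, w u * h u ∂μ := by
  rw [← integral_const_mul]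
  refine setIntegral_mono_on (hw.const_mul _) hwh hs fun u hu => ?_
  rcases lt_trichotomy u c with huc | rfl | hcu
  · nlinarith [hh hu hc huc.le, hw_neg u hu huc]
  · rw [mul_comm]
  · nlinarith [hh hc hu hcu.le, hw_pos u hu hcu]

theorem eqOn_sub_mul_exp_neg_mul_rpow (s : ℝ) :
    EqOn (fun u => (u - s) * (exp (-u) * u ^ (s - 1)))
      (fun u => exp (-u) * u ^ (s + 1 - 1) - s * (exp (-u) * u ^ (s - 1))) (Ioi 0) := by
  intro u (hu : 0 < u)
  simp only
  rw [add_sub_cancel_right, ← sub_add_cancel s 1, rpow_add_one hu.ne', add_sub_cancel_right]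
  ring

theorem integrableOn_sub_mul_exp_neg_mul_rpow {s : ℝ} (hs : 0 < s) :
    IntegrableOn (fun u => (u - s) * (exp (-u) * u ^ (s - 1))) (Ioi 0) :=
  ((GammaIntegral_convergent (by linarith)).sub
    ((GammaIntegral_convergent hs).const_mul s)).congr_fun
      (eqOn_sub_mul_exp_neg_mul_rpow s).symm measurableSet_Ioi

theorem integral_sub_mul_exp_neg_mul_rpow {s : ℝ} (hs : 0 < s) :
    ∫ u in Ioi 0, (u - s) * (exp (-u) * u ^ (s - 1)) = 0 := by
  rw [setIntegral_congr_fun measurableSet_Ioi (eqOn_sub_mul_exp_neg_mul_rpow s),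
    integral_sub (GammaIntegral_convergent (by linarith))
      ((GammaIntegral_convergent hs).const_mul s),
    integral_const_mul, ← Gamma_eq_integral (by linarith), ← Gamma_eq_integral hs,
    Gamma_add_one hs.ne', sub_self]

theorem monotoneOn_sqrt_div_sqrt_add {a : ℝ} (ha : 0 ≤ a) :
    MonotoneOn (fun u => √u / √(a + u)) (Ioi 0) := by
  intro u (hu : 0 < u) v (hv : 0 < v) huv
  rw [div_le_div_iff₀ (by positivity) (by positivity), ← sqrt_mul hu.le, ← sqrt_mul hv.le]
  exact sqrt_le_sqrt (by nlinarith)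

theorem integrableOn_pow_mul_exp_neg_div_sqrt (m : ℕ) (x : ℝ) :
    IntegrableOn (fun u => u ^ m * exp (-u) / √(x ^ 2 + u)) (Ioi 0) := by
  refine (GammaIntegral_convergent (s := m + 1 / 2) (by positivity)).mono' ?_ ?_
  · refine ContinuousOn.aestronglyMeasurable ?_ measurableSet_Ioi
    exact (by fun_prop : Continuous fun u : ℝ => u ^ m * exp (-u)).continuousOn.div
      (by fun_prop) fun u (hu : 0 < u) => (sqrt_pos.mpr (by positivity)).ne'
  · filter_upwards [ae_restrict_mem measurableSet_Ioi] with u (hu : 0 < u)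
    rw [norm_of_nonneg (by positivity), show (m : ℝ) + 1 / 2 - 1 = m - 1 / 2 by ring,
      rpow_sub hu, rpow_natCast, ← sqrt_eq_rpow, mul_div_assoc', mul_comm (exp _)]
    exact div_le_div_of_nonneg_left (by positivity) (sqrt_pos.mpr hu)
      (sqrt_le_sqrt (by nlinarith))

theorem mul_integral_pow_mul_exp_neg_div_sqrt_le_succ (N : ℕ) (x : ℝ) :
    (N + 1 / 2) * ∫ u in Ioi 0, u ^ N * exp (-u) / √(x ^ 2 + u) ≤
      ∫ u in Ioi 0, u ^ (N + 1) * exp (-u) / √(x ^ 2 + u) := by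
  set s : ℝ := N + 1 / 2
  have hs : 0 < s := by positivity
  have hwh : EqOn (fun u => (u - s) * (exp (-u) * u ^ (s - 1)) * (√u / √(x ^ 2 + u)))
      (fun u => u ^ (N + 1) * exp (-u) / √(x ^ 2 + u) - s * (u ^ N * exp (-u) / √(x ^ 2 + u)))
      (Ioi 0) := by
    intro u (hu : 0 < u)
    have hpow : u ^ (s - 1) * √u = u ^ N := by
      rw [sqrt_eq_rpow, ← rpow_add hu, ← rpow_natCast]
      congr 1
      ring
    simp only [pow_succ, ← hpow]
    ring
  have hI := integrableOn_pow_mul_exp_neg_div_sqrt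
  have key := mul_setIntegral_le_setIntegral_mul_of_monotoneOn measurableSet_Ioi hs
    (monotoneOn_sqrt_div_sqrt_add (sq_nonneg x))
    (fun u (hu : 0 < u) hus => mul_nonpos_of_nonpos_of_nonneg (by linarith) (by positivity))
    (fun u (hu : 0 < u) hsu => mul_nonneg (by linarith) (by positivity))
    (integrableOn_sub_mul_exp_neg_mul_rpow hs)
    (((hI (N + 1) x).sub ((hI N x).const_mul s)).congr_fun hwh.symm measurableSet_Ioi)
  rw [integral_sub_mul_exp_neg_mul_rpow hs, mul_zero, setIntegral_congr_fun measurableSet_Ioi hwh,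
    integral_sub (hI (N + 1) x) ((hI N x).const_mul s), integral_const_mul] at key
  linarith

theorem mul_Vm_le_mul_Vm_succ (N : ℕ) (x : ℝ) :
    (N + 1 / 2) * Vm N x ≤ (N + 1) * Vm (N + 1) x := by
  unfold Vm
  rw [Nat.factorial_succ, Nat.cast_mul, Nat.cast_succ, mul_left_comm]
  calc 1 / (N.factorial : ℝ) * ((N + 1 / 2) * ∫ u in Ioi 0, u ^ N * exp (-u) / √(x ^ 2 + u))
      ≤ 1 / N.factorial * ∫ u in Ioi 0, u ^ (N + 1) * exp (-u) / √(x ^ 2 + u) := by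
        gcongr
        exact mul_integral_pow_mul_exp_neg_div_sqrt_le_succ N x
    _ = _ := by field_simp

theorem sum_range_Vm_le (N : ℕ) (x : ℝ) :
    ∑ j ∈ Finset.range N, Vm j x ≤ 2 * N * Vm N x := by
  induction N with
  | zero => simp
  | succ N ih =>
    rw [Finset.sum_range_succ]
    push_cast
    linarith [mul_Vm_le_mul_Vm_succ N x]

/-- For every `N ≥ 1` and every `x`, the average
`V_av(x) = (1/N) Σ_{j=0}^{N−1} V_j(x)` satisfies `V_av(x) ≤ 2 V_N(x)`. -/
theorem Vav_le_two_VN (N : ℕ) (hN : 1 ≤ N) (x : ℝ) :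
    (1 / (N : ℝ)) * ∑ j ∈ Finset.range N, Vm j x ≤ 2 * Vm N x := by
  have hN' : (0 : ℝ) < N := mod_cast hN
  calc (1 / (N : ℝ)) * ∑ j ∈ Finset.range N, Vm j x
      ≤ 1 / N * (2 * N * Vm N x) := by gcongr; exact sum_range_Vm_le N x
    _ = 2 * Vm N x := by field_simp
end
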